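/- arXiv:1710.10900 — 9 statements merged into one kernel-verified Lean document; each statement's English description precedes it below -/
import Mathlib

section
/- There exists a 2-colouring of the edges of the complete symmetric digraph on the positive integers such that every monochromatic directed path (finite or infinite) has upper density 0, where the upper density of a path is the upper density of its vertex set. -/
open Filter

open scoped Classical in
/-- Upper density of a set of naturals: `limsup |A ∩ {1,...,n}| / n`. -/
noncomputable def upDens (A : Set ℕ) : ℝ :=
  limsup (fun n : ℕ => (((Finset.Icc 1 n).filter (fun m => m ∈ A)).card : ℝ) / n) atTop

def red : Bool := true
def blue : Bool := false

/-- A finite directed path (list of distinct positive integers) all of whose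
consecutive edges have colour `col` under the edge-colouring `c`. -/
def FinPath (c : ℕ → ℕ → Bool) (col : Bool) (l : List ℕ) : Prop :=
  l.Nodup ∧ (∀ v ∈ l, 0 < v) ∧ l.Chain' (fun a b => c a b = col)

/-- An infinite directed path of colour `col` under the edge-colouring `c`. -/
def InfPath (c : ℕ → ℕ → Bool) (col : Bool) (f : ℕ → ℕ) : Prop :=
  Function.Injective f ∧ (∀ j, 0 < f j) ∧ ∀ j, c (f j) (f (j + 1)) = col

/-- There is no directed path of colour `col` with `r` edges (i.e. `r+1` vertices). -/
def NoPathOfLength (c : ℕ → ℕ → Bool) (col : Bool) (r : ℕ) : Prop :=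
  ¬ ∃ l : List ℕ, FinPath c col l ∧ l.length = r + 1

/-- There is a directed path of colour `col` with `k` edges starting at `v`. -/
def PathFrom (c : ℕ → ℕ → Bool) (col : Bool) (v k : ℕ) : Prop :=
  ∃ l : List ℕ, FinPath c col l ∧ l.head? = some v ∧ l.length = k + 1

/-- `v ∈ A_i`: the longest red directed path starting at `v` has exactly `i` edges. -/
def Level (c : ℕ → ℕ → Bool) (v i : ℕ) : Prop :=
  PathFrom c red v i ∧ ¬ PathFrom c red v (i + 1)

/-- `u` is below `v` in the "low bits first" lexicographic order. -/
def WltP (u v : ℕ) : Prop :=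
  ∃ d, u % 2 ^ d = v % 2 ^ d ∧ u % 2 ^ (d + 1) < v % 2 ^ (d + 1)

lemma wlt_total {u v : ℕ} (h : u ≠ v) : WltP u v ∨ WltP v u := by
  have hex : ∃ k, u % 2 ^ k ≠ v % 2 ^ k := by
    refine ⟨max u v + 1, ?_⟩
    have hu : u < 2 ^ (max u v + 1) :=
      lt_of_lt_of_le (Nat.lt_two_pow_self (n := u))
        (Nat.pow_le_pow_right (by norm_num) (by omega))
    have hv : v < 2 ^ (max u v + 1) :=
      lt_of_lt_of_le (Nat.lt_two_pow_self (n := v))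
        (Nat.pow_le_pow_right (by norm_num) (by omega))
    rw [Nat.mod_eq_of_lt hu, Nat.mod_eq_of_lt hv]
    exact h
  classical
  let m := Nat.find hex
  have hm : u % 2 ^ m ≠ v % 2 ^ m := Nat.find_spec hex
  have hm' : ∀ k < m, u % 2 ^ k = v % 2 ^ k := fun k hk => by
    have := Nat.find_min hex hk
    simpa using this
  have hm0 : m ≠ 0 := by
    intro h0
    apply hm
    rw [h0]
    simp [Nat.mod_one]
  obtain ⟨d, hd⟩ : ∃ d, m = d + 1 := ⟨m - 1, by omega⟩
  rw [hd] at hm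
  have heq : u % 2 ^ d = v % 2 ^ d := hm' d (by omega)
  rcases lt_or_gt_of_ne hm with hlt | hgt
  · exact Or.inl ⟨d, heq, hlt⟩
  · exact Or.inr ⟨d, heq.symm, hgt⟩

lemma wlt_step {u v d : ℕ} (huv : WltP u v) (hd : u % 2 ^ d = v % 2 ^ d) :
    u % 2 ^ (d + 1) ≤ v % 2 ^ (d + 1) := by
  obtain ⟨e, he1, he2⟩ := huv
  rcases Nat.lt_or_ge e d with hlt | hge
  · -- e + 1 ≤ d: contradiction with he2
    exfalso
    have hdvd : 2 ^ (e + 1) ∣ 2 ^ d := pow_dvd_pow 2 (by omega)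
    have : u % 2 ^ (e + 1) = v % 2 ^ (e + 1) := by
      rw [← Nat.mod_mod_of_dvd u hdvd, ← Nat.mod_mod_of_dvd v hdvd, hd]
    omega
  · rcases Nat.lt_or_ge d e with hlt' | hge'
    · -- d + 1 ≤ e
      have hdvd : 2 ^ (d + 1) ∣ 2 ^ e := pow_dvd_pow 2 (by omega)
      have : u % 2 ^ (d + 1) = v % 2 ^ (d + 1) := by
        rw [← Nat.mod_mod_of_dvd u hdvd, ← Nat.mod_mod_of_dvd v hdvd, he1]
      omega
    · have : e = d := by omega
      subst this
      omega

lemma stab_mono (g : ℕ → ℕ) (B : ℕ) (mono : ∀ j, g j ≤ g (j + 1))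
    (bd : ∀ j, g j < B) : ∃ J, ∀ j, J ≤ j → g j = g J := by
  have hmono : Monotone g := monotone_nat_of_le_succ mono
  have hne : (Set.range g).Nonempty := ⟨g 0, ⟨0, rfl⟩⟩
  have hbdd : BddAbove (Set.range g) := ⟨B, fun x ⟨j, hj⟩ => hj ▸ (bd j).le⟩
  obtain ⟨J, hJ⟩ := Nat.sSup_mem hne hbdd
  refine ⟨J, fun j hj => le_antisymm ?_ (hmono hj)⟩
  rw [hJ]
  exact le_csSup hbdd ⟨j, rfl⟩

lemma stab_anti (g : ℕ → ℕ) (anti : ∀ j, g (j + 1) ≤ g j) :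
    ∃ J, ∀ j, J ≤ j → g j = g J := by
  have hanti : Antitone g := antitone_nat_of_succ_le anti
  obtain ⟨J, hJ⟩ := Nat.sInf_mem (⟨g 0, ⟨0, rfl⟩⟩ : (Set.range g).Nonempty)
  refine ⟨J, fun j hj => le_antisymm (hanti hj) ?_⟩
  rw [hJ]
  exact Nat.sInf_le ⟨j, rfl⟩

lemma key_inc (f : ℕ → ℕ) (h : ∀ j, WltP (f j) (f (j + 1))) (d : ℕ) :
    ∃ J, ∀ j, J ≤ j → f j % 2 ^ d = f J % 2 ^ d := by
  induction d with
  | zero => exact ⟨0, fun j _ => by simp [Nat.mod_one]⟩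
  | succ d ih =>
    obtain ⟨J, hJ⟩ := ih
    have mono : ∀ j, f (J + j) % 2 ^ (d + 1) ≤ f (J + j + 1) % 2 ^ (d + 1) := by
      intro j
      refine wlt_step (h (J + j)) ?_
      rw [hJ (J + j) (by omega), hJ (J + j + 1) (by omega)]
    obtain ⟨K, hK⟩ := stab_mono (fun j => f (J + j) % 2 ^ (d + 1)) (2 ^ (d + 1))
      mono (fun j => Nat.mod_lt _ (Nat.pow_pos (by norm_num)))
    refine ⟨J + K, fun j hj => ?_⟩
    have h1 := hK (j - J) (by omega)
    rw [show J + (j - J) = j by omega] at h1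
    exact h1

lemma key_dec (f : ℕ → ℕ) (h : ∀ j, WltP (f (j + 1)) (f j)) (d : ℕ) :
    ∃ J, ∀ j, J ≤ j → f j % 2 ^ d = f J % 2 ^ d := by
  induction d with
  | zero => exact ⟨0, fun j _ => by simp [Nat.mod_one]⟩
  | succ d ih =>
    obtain ⟨J, hJ⟩ := ih
    have anti : ∀ j, f (J + j + 1) % 2 ^ (d + 1) ≤ f (J + j) % 2 ^ (d + 1) := by
      intro j
      refine wlt_step (h (J + j)) ?_
      rw [hJ (J + j) (by omega), hJ (J + j + 1) (by omega)]
    obtain ⟨K, hK⟩ := stab_anti (fun j => f (J + j) % 2 ^ (d + 1)) anti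
    refine ⟨J + K, fun j hj => ?_⟩
    have h1 := hK (j - J) (by omega)
    rw [show J + (j - J) = j by omega] at h1
    exact h1

lemma card_residue (n q r : ℕ) :
    ((Finset.Icc 1 n).filter (fun m => m % q = r)).card ≤ n / q + 1 := by
  classical
  have h : ((Finset.Icc 1 n).filter (fun m => m % q = r)).card
      ≤ (Finset.Icc 0 (n / q)).card := by
    apply Finset.card_le_card_of_injOn (fun m => m / q)
    · intro m hm
      simp only [Finset.coe_filter, Set.mem_setOf_eq, Finset.mem_coe, Finset.mem_filter, Finset.mem_Icc] at hm ⊢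
      exact ⟨Nat.zero_le _, Nat.div_le_div_right hm.1.2⟩
    · intro a ha b hb hab
      simp only [Finset.coe_filter, Set.mem_setOf_eq, Finset.mem_Icc] at ha hb
      have h1 := Nat.div_add_mod a q
      have h2 := Nat.div_add_mod b q
      simp only at hab
      have h3 : q * (a / q) = q * (b / q) := by rw [hab]
      omega
  simpa using h

open scoped Classical in
lemma upDens_eq_zero (A : Set ℕ)
    (h : ∀ d : ℕ, ∃ (F : Finset ℕ) (r : ℕ), ∀ m ∈ A, m ∈ F ∨ m % 2 ^ d = r) :
    upDens A = 0 := by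
  have htend : Filter.Tendsto
      (fun n : ℕ => (((Finset.Icc 1 n).filter (fun m => m ∈ A)).card : ℝ) / n)
      atTop (nhds 0) := by
    rw [Metric.tendsto_atTop]
    intro ε hε
    obtain ⟨d, hd⟩ : ∃ d : ℕ, (2 / ε : ℝ) < 2 ^ d := pow_unbounded_of_one_lt _ one_lt_two
    have hd2 : (1 : ℝ) / 2 ^ d < ε / 2 := by
      rw [div_lt_div_iff₀ (by positivity) (by norm_num)]
      rw [div_lt_iff₀ hε] at hd
      nlinarith [hd]
    obtain ⟨F, r, hFr⟩ := h d
    obtain ⟨N, hN⟩ := exists_nat_gt ((F.card + 1 : ℝ) / (ε / 2))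
    refine ⟨max N 1, fun n hn => ?_⟩
    have hn1 : 1 ≤ n := le_trans (le_max_right N 1) hn
    have hnN : N ≤ n := le_trans (le_max_left N 1) hn
    have hnpos : (0 : ℝ) < n := by exact_mod_cast hn1
    -- cardinality bound
    have hsub : (Finset.Icc 1 n).filter (fun m => m ∈ A)
        ⊆ F ∪ (Finset.Icc 1 n).filter (fun m => m % 2 ^ d = r) := by
      intro m hm
      simp only [Finset.mem_filter] at hm
      rcases hFr m hm.2 with h1 | h1
      · exact Finset.mem_union_left _ h1
      · exact Finset.mem_union_right _ (Finset.mem_filter.2 ⟨hm.1, h1⟩)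
    have hcard : ((Finset.Icc 1 n).filter (fun m => m ∈ A)).card
        ≤ F.card + (n / 2 ^ d + 1) := by
      calc ((Finset.Icc 1 n).filter (fun m => m ∈ A)).card
          ≤ (F ∪ (Finset.Icc 1 n).filter (fun m => m % 2 ^ d = r)).card :=
            Finset.card_le_card hsub
        _ ≤ F.card + ((Finset.Icc 1 n).filter (fun m => m % 2 ^ d = r)).card :=
            Finset.card_union_le _ _
        _ ≤ F.card + (n / 2 ^ d + 1) := by
            exact Nat.add_le_add_left (card_residue n (2 ^ d) r) _
    have hcardR : (((Finset.Icc 1 n).filter (fun m => m ∈ A)).card : ℝ)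
        ≤ (F.card + 1 : ℝ) + (n : ℝ) / 2 ^ d := by
      have h1 : (((Finset.Icc 1 n).filter (fun m => m ∈ A)).card : ℝ)
          ≤ ((F.card + (n / 2 ^ d + 1) : ℕ) : ℝ) := by exact_mod_cast hcard
      have h2 : ((n / 2 ^ d : ℕ) : ℝ) ≤ (n : ℝ) / (2 ^ d : ℝ) := by
        have := Nat.cast_div_le (α := ℝ) (m := n) (n := 2 ^ d)
        simpa using this
      push_cast at h1
      linarith
    rw [Real.dist_eq, sub_zero, abs_of_nonneg (by positivity)]
    have hdiv : (((Finset.Icc 1 n).filter (fun m => m ∈ A)).card : ℝ) / n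
        ≤ (F.card + 1 : ℝ) / n + 1 / 2 ^ d := by
      have : (n : ℝ) / 2 ^ d / n = 1 / 2 ^ d := by
        rw [div_right_comm, div_self (ne_of_gt hnpos)]
      calc (((Finset.Icc 1 n).filter (fun m => m ∈ A)).card : ℝ) / n
          ≤ ((F.card + 1 : ℝ) + (n : ℝ) / 2 ^ d) / n :=
            div_le_div_of_nonneg_right hcardR hnpos.le
        _ = (F.card + 1 : ℝ) / n + (n : ℝ) / 2 ^ d / n := add_div _ _ _
        _ = (F.card + 1 : ℝ) / n + 1 / 2 ^ d := by rw [this]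
    have hsmall : (F.card + 1 : ℝ) / n < ε / 2 := by
      rw [div_lt_iff₀ hnpos]
      rw [div_lt_iff₀ (by linarith : (0:ℝ) < ε / 2)] at hN
      have : (N : ℝ) ≤ n := by exact_mod_cast hnN
      nlinarith
    linarith
  unfold upDens
  exact htend.limsup_eq

/-- There is a 2-colouring of the complete symmetric digraph on the positive integers
in which every monochromatic directed path, finite or infinite, has upper density 0. -/
theorem stmt0 :
    ∃ c : ℕ → ℕ → Bool,
      (∀ (col : Bool) (l : List ℕ), FinPath c col l → upDens {v | v ∈ l} = 0) ∧
      (∀ (col : Bool) (f : ℕ → ℕ), InfPath c col f → upDens (Set.range f) = 0) := by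
  classical
  refine ⟨fun u v => if WltP u v then true else false, ?_, ?_⟩
  · intro col l _
    apply upDens_eq_zero
    intro d
    exact ⟨l.toFinset, 0, fun m hm => Or.inl (List.mem_toFinset.2 hm)⟩
  · intro col f hf
    obtain ⟨hinj, _, hcol⟩ := hf
    apply upDens_eq_zero
    intro d
    have hkey : ∃ J, ∀ j, J ≤ j → f j % 2 ^ d = f J % 2 ^ d := by
      cases col with
      | true =>
        have hw : ∀ j, WltP (f j) (f (j + 1)) := by
          intro j
          have := hcol j
          by_contra hc
          simp [hc] at this
        exact key_inc f hw d
      | false =>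
        have hw : ∀ j, WltP (f (j + 1)) (f j) := by
          intro j
          have hne : f j ≠ f (j + 1) := fun e => by
            have := hinj e; omega
          have := hcol j
          have hnw : ¬ WltP (f j) (f (j + 1)) := by
            intro hc
            simp [hc] at this
          rcases wlt_total hne with h1 | h1
          · exact absurd h1 hnw
          · exact h1
        exact key_dec f hw d
    obtain ⟨J, hJ⟩ := hkey
    refine ⟨(Finset.range J).image f, f J % 2 ^ d, ?_⟩
    rintro m ⟨j, rfl⟩
    rcases Nat.lt_or_ge j J with h1 | h1
    · exact Or.inl (Finset.mem_image.2 ⟨j, Finset.mem_range.2 h1, rfl⟩)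
    · exact Or.inr (hJ j h1)
end

section
/- Consider the 2-colouring of the complete symmetric digraph on ℕ⁺ defined as follows: for distinct m, n, let t = min{s : m ≢ n (mod 2^s)}; after swapping m and n if necessary so that m ≡ x (mod 2^t) with 0 ≤ x ≤ 2^{t-1} - 1 and n ≡ 2^{t-1} + x (mod 2^t), colour (m,n) red and (n,m) blue. Then for every k ∈ ℕ, every infinite red directed path in this colouring is eventually contained in a single residue class modulo 2^k. -/
open Filter

/-- The edge `(m,n)` is red in the explicit colouring: for the minimal `t` with
`m ≢ n (mod 2^t)` (here `t = s+1`), we have `m ≡ x` and `n ≡ 2^{t-1}+x (mod 2^t)`. -/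
def redE (m n : ℕ) : Prop :=
  ∃ s : ℕ, m % 2 ^ s = n % 2 ^ s ∧ n % 2 ^ (s + 1) = m % 2 ^ (s + 1) + 2 ^ s

/-- Every infinite red directed path in the explicit colouring is, for each `k`,
eventually contained in a single residue class modulo `2^k`. -/
theorem stmt1 (f : ℕ → ℕ) (hinj : Function.Injective f) (hpos : ∀ j, 0 < f j)
    (hred : ∀ j, redE (f j) (f (j + 1))) (k : ℕ) :
    ∃ i N : ℕ, ∀ j ≥ N, f j % 2 ^ k = i := by
  induction k with
  | zero => exact ⟨0, 0, fun j _ => Nat.mod_one _⟩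
  | succ k ih =>
    obtain ⟨i, N, h⟩ := ih
    set b : ℕ → ℕ := fun j => f j % 2 ^ (k + 1) with hb
    have hpow : (0:ℕ) < 2 ^ k := by positivity
    have hA : ∀ j ≥ N, b j = i ∨ b j = i + 2 ^ k := by
      intro j hj
      have h1 : b j % 2 ^ k = i := by
        show f j % 2 ^ (k + 1) % 2 ^ k = i
        rw [Nat.mod_mod_of_dvd _ (pow_dvd_pow 2 (Nat.le_succ k))]
        exact h j hj
      have h2 : b j < 2 ^ (k + 1) := Nat.mod_lt _ (by positivity)
      have h3 : b j = 2 ^ k * (b j / 2 ^ k) + i := by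
        conv_lhs => rw [← Nat.div_add_mod (b j) (2 ^ k)]
        rw [h1]
      have h4 : b j / 2 ^ k < 2 := by
        apply Nat.div_lt_of_lt_mul
        calc b j < 2 ^ (k + 1) := h2
        _ = 2 ^ k * 2 := by ring
      set q := b j / 2 ^ k with hq
      interval_cases q
      · left; omega
      · right; omega
    have hB : ∀ j ≥ N, b (j + 1) = b j ∨ b (j + 1) = b j + 2 ^ k := by
      intro j hj
      obtain ⟨s, h1, h2⟩ := hred j
      rcases lt_trichotomy s k with hs | hs | hs
      · exfalso
        have hsk : s + 1 ≤ k := hs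
        have e1 : f j % 2 ^ (s + 1) = i % 2 ^ (s + 1) := by
          rw [← h j hj, Nat.mod_mod_of_dvd _ (pow_dvd_pow 2 hsk)]
        have e2 : f (j + 1) % 2 ^ (s + 1) = i % 2 ^ (s + 1) := by
          rw [← h (j + 1) (le_trans hj (Nat.le_succ j)),
            Nat.mod_mod_of_dvd _ (pow_dvd_pow 2 hsk)]
        have hs0 : (0:ℕ) < 2 ^ s := by positivity
        omega
      · subst hs; right; exact h2
      · left
        show f (j + 1) % 2 ^ (k + 1) = f j % 2 ^ (k + 1)
        have hd : 2 ^ (k + 1) ∣ 2 ^ s := pow_dvd_pow 2 hs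
        calc f (j + 1) % 2 ^ (k + 1) = f (j + 1) % 2 ^ s % 2 ^ (k + 1) :=
              (Nat.mod_mod_of_dvd _ hd).symm
          _ = f j % 2 ^ s % 2 ^ (k + 1) := by rw [h1]
          _ = f j % 2 ^ (k + 1) := Nat.mod_mod_of_dvd _ hd
    by_cases hE : ∃ j, N ≤ j ∧ b j = i + 2 ^ k
    · obtain ⟨j₀, hj₀, hbj₀⟩ := hE
      refine ⟨i + 2 ^ k, j₀, fun j hj => ?_⟩
      induction j, hj using Nat.le_induction with
      | base => exact hbj₀
      | succ n hn ihn =>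
        have hN : N ≤ n := le_trans hj₀ hn
        rcases hB n hN with h' | h'
        · rw [show f (n + 1) % 2 ^ (k + 1) = b (n + 1) from rfl, h']; exact ihn
        · have := hA (n + 1) (by omega)
          have hbn : b n = i + 2 ^ k := ihn
          omega
    · push_neg at hE
      refine ⟨i, N, fun j hj => ?_⟩
      rcases hA j hj with h' | h'
      · exact h'
      · exact absurd h' (hE j hj)
end

section
/- Let r ≥ 1 and fix a 2-colouring (red/blue) of the complete symmetric digraph on ℕ⁺ that contains no red directed path with r edges. Then there exists a blue directed path with upper density at least 1/r. -/
open Filter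

/- ==== auxiliary lemmas ==== -/


lemma pathFrom_mono {c col v} {j k : ℕ} (hjk : j ≤ k) (h : PathFrom c col v k) :
    PathFrom c col v j := by
  obtain ⟨l, ⟨hnd, hpos, hch⟩, hhd, hlen⟩ := h
  refine ⟨l.take (j+1), ⟨hnd.sublist (List.take_sublist _ _), fun v hv => hpos v ((List.take_sublist _ _).mem hv), hch.prefix (List.take_prefix _ _)⟩, ?_, ?_⟩
  · cases l with
    | nil => simp at hlen
    | cons a t => simpa using hhd
  · rw [List.length_take, hlen]; omega

lemma exists_level {r : ℕ} (hr : 1 ≤ r) {c : ℕ → ℕ → Bool} (h : NoPathOfLength c red r)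
    {v : ℕ} (hv : 0 < v) : ∃ i, i < r ∧ Level c v i := by
  classical
  have h0 : PathFrom c red v 0 := ⟨[v], ⟨by simp, by simpa using hv, List.isChain_singleton _⟩, by simp, by simp⟩
  have hnr : ¬ PathFrom c red v r := by
    rintro ⟨l, hl, _, hlen⟩; exact h ⟨l, hl, hlen⟩
  have hex : ∃ j, ¬ PathFrom c red v (j + 1) := ⟨r - 1, by rwa [Nat.sub_add_cancel hr]⟩
  refine ⟨Nat.find hex, ?_, ?_, Nat.find_spec hex⟩
  · have hle : Nat.find hex ≤ r - 1 := Nat.find_le (by rwa [Nat.sub_add_cancel hr]); omega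
  · rcases Nat.eq_zero_or_pos (Nat.find hex) with h0' | hpos'
    · rwa [h0']
    · have := Nat.find_min hex (m := Nat.find hex - 1) (by omega)
      rw [not_not] at this
      have e : Nat.find hex - 1 + 1 = Nat.find hex := by omega
      rwa [e] at this

lemma level_pos {c v i} (h : Level c v i) : 0 < v := by
  obtain ⟨⟨l, ⟨_, hpos, _⟩, hhd, _⟩, _⟩ := h
  exact hpos v (by cases l <;> simp_all)

/-- the in-neighbour lemma: if `b` has level `i` with maximum path `l`, and `z` is positive,
of level `j ≤ i`, not on `l`, then the edge `z → b` is blue. -/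
lemma in_edge_blue {c : ℕ → ℕ → Bool} {b i j z : ℕ} {l : List ℕ}
    (hl : FinPath c red l) (hhd : l.head? = some b) (hlen : l.length = i + 1)
    (hz : 0 < z) (hzl : z ∉ l) (hj : j ≤ i) (hlev : Level c z j) :
    c z b = blue := by
  by_contra hne
  have hred : c z b = red := by
    revert hne; cases hcz : c z b <;> simp [red, blue]
  have hpf : PathFrom c red z (i + 1) := by
    obtain ⟨hnd, hpos, hch⟩ := hl
    refine ⟨z :: l, ⟨by simp [hnd, hzl], by intro x hx; rcases List.mem_cons.mp hx with rfl | hx'; exacts [hz, hpos x hx'], ?_⟩, by simp, by simp [hlen]⟩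
    · cases l with
      | nil => simp at hhd
      | cons a t =>
        simp only [List.head?_cons, Option.some_inj] at hhd
        exact List.IsChain.cons_cons (hhd ▸ hred) hch
  exact hlev.2 (pathFrom_mono (by omega) hpf)


lemma greedy_red {c : ℕ → ℕ → Bool} {S : Set ℕ} (hS : S.Infinite)
    (hpos : ∀ a ∈ S, 0 < a) (E : ℕ → Set ℕ) (hE : ∀ a ∈ S, (E a).Finite)
    (hred : ∀ a ∈ S, ∀ w ∈ S, w ∉ E a → w ≠ a → c a w = red) (n : ℕ) :
    ∃ l : List ℕ, l ≠ [] ∧ FinPath c red l ∧ l.length = n + 1 ∧ ∀ v ∈ l, v ∈ S := by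
  induction n with
  | zero =>
    obtain ⟨a, ha⟩ := hS.nonempty
    exact ⟨[a], by simp, ⟨by simp, by simpa using hpos a ha, List.isChain_singleton _⟩, by simp, by simpa using ha⟩
  | succ n ih =>
    obtain ⟨l, hne, ⟨hnd, hposl, hch⟩, hlen, hmem⟩ := ih
    set e := l.getLast hne with he
    have heS : e ∈ S := hmem e (List.getLast_mem hne)
    have : ((S \ (E e ∪ {x | x ∈ l}))).Infinite :=
      hS.diff (((hE e heS).union (l.finite_toSet)))
    obtain ⟨w, hwS, hwE⟩ := this.nonempty
    simp only [Set.mem_union, Set.mem_setOf_eq, not_or] at hwE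
    have hwne : w ≠ e := fun hh => hwE.2 (hh ▸ List.getLast_mem hne)
    refine ⟨l ++ [w], by simp, ⟨?_, ?_, ?_⟩, by simp [hlen], ?_⟩
    · simp only [List.nodup_append, List.nodup_cons]
      exact ⟨hnd, by simp, by simpa using fun a ha (haw : a = w) => hwE.2 (haw ▸ ha)⟩
    · intro v hv
      rcases List.mem_append.mp hv with hv | hv
      · exact hposl v hv
      · simp only [List.mem_singleton] at hv; exact hv ▸ hpos w hwS
    · show List.IsChain _ (l ++ [w])
      rw [List.isChain_append]
      refine ⟨hch, List.isChain_singleton _, ?_⟩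
      intro x hx y hy
      rw [List.getLast?_eq_getLast hne] at hx
      simp only [Option.mem_def, Option.some_inj] at hx
      simp only [List.head?_cons, Option.mem_def, Option.some_inj] at hy
      subst hx; subst hy
      exact hred e heS w hwS hwE.1 hwne
    · intro v hv
      rcases List.mem_append.mp hv with hv | hv
      · exact hmem v hv
      · simp only [List.mem_singleton] at hv; exact hv ▸ hwS


noncomputable def nxb (G : Set ℕ) (s : List ℕ) : ℕ := sInf {n | n ∈ G ∧ n ∉ s}
noncomputable def nxz (G : Set ℕ) (W : ℕ → ℕ → Set ℕ) (s : List ℕ) : ℕ :=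
  sInf {n | n ∈ W s.headI (nxb G s) ∧ n ∉ s}
noncomputable def stp (G : Set ℕ) (W : ℕ → ℕ → Set ℕ) (s : List ℕ) : List ℕ :=
  nxb G s :: nxz G W s :: s
noncomputable def SS (G : Set ℕ) (W : ℕ → ℕ → Set ℕ) : ℕ → List ℕ :=
  fun k => (stp G W)^[k] [sInf G]

def PInv (c : ℕ → ℕ → Bool) (G : Set ℕ) (s : List ℕ) : Prop :=
  s ≠ [] ∧ s.Nodup ∧ (∀ v ∈ s, 0 < v) ∧ s.Chain' (fun x y => c y x = blue) ∧ s.headI ∈ G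

section constr
variable {c : ℕ → ℕ → Bool} {G : Set ℕ} {W : ℕ → ℕ → Set ℕ}
variable (hG : G.Infinite) (hGpos : ∀ a ∈ G, 0 < a)
  (hW : ∀ e ∈ G, ∀ b ∈ G, (W e b).Infinite)
  (hWgood : ∀ e ∈ G, ∀ b ∈ G, ∀ z ∈ W e b, 0 < z ∧ c e z = blue ∧ c z b = blue ∧ z ≠ b)

include hG in
lemma nxb_spec {s : List ℕ} : nxb G s ∈ G ∧ nxb G s ∉ s := by
  have hne : {n | n ∈ G ∧ n ∉ s}.Nonempty := by
    have : (G \ {n | n ∈ s}).Infinite := hG.diff s.finite_toSet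
    obtain ⟨x, hx⟩ := this.nonempty
    exact ⟨x, hx.1, hx.2⟩
  exact Nat.sInf_mem hne

include hG hGpos hW hWgood in
lemma stp_inv {s : List ℕ} (h : PInv c G s) : PInv c G (stp G W s) := by
  obtain ⟨hne, hnd, hpos, hch, hhd⟩ := h
  obtain ⟨hbG, hbs⟩ := nxb_spec (hG := hG) (s := s)
  set e := s.headI with he
  set b := nxb G s with hb
  have hzne : {n | n ∈ W e b ∧ n ∉ s}.Nonempty := by
    have : (W e b \ {n | n ∈ s}).Infinite := (hW e hhd b hbG).diff s.finite_toSet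
    obtain ⟨x, hx⟩ := this.nonempty
    exact ⟨x, hx.1, hx.2⟩
  have hzspec := Nat.sInf_mem hzne
  set z := nxz G W s with hz
  have hzW : z ∈ W e b := hzspec.1
  have hzs : z ∉ s := hzspec.2
  obtain ⟨hzpos, hez, hzb, hzneb⟩ := hWgood e hhd b hbG z hzW
  have hzz : b ∉ z :: s := by
    intro hmem
    rcases List.mem_cons.mp hmem with h1 | h1
    · exact hzneb h1.symm
    · exact hbs h1
  refine ⟨by simp [stp], ?_, ?_, ?_, ?_⟩
  · simp only [stp, List.nodup_cons, ← hb, ← hz]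
    exact ⟨hzz, hzs, hnd⟩
  · intro v hv
    simp only [stp, ← hb, ← hz] at hv
    rcases List.mem_cons.mp hv with rfl | hv
    · exact hGpos _ hbG
    rcases List.mem_cons.mp hv with rfl | hv
    · exact hzpos
    · exact hpos v hv
  · show List.Chain' _ (b :: z :: s)
    refine List.IsChain.cons_cons hzb ?_
    refine List.isChain_cons.mpr ⟨?_, hch⟩
    intro y hy
    have : y = e := by
      cases s with
      | nil => simp at hne
      | cons a t => simp only [List.head?_cons, Option.mem_def, Option.some_inj] at hy; simp [he, hy]
    exact this ▸ hez
  · show (b :: z :: s).headI ∈ G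
    simpa using hbG

include hG hGpos hW hWgood in
lemma SS_inv : ∀ k, PInv c G (SS G W k) := by
  intro k
  induction k with
  | zero =>
    have h0 : sInf G ∈ G := Nat.sInf_mem hG.nonempty
    exact ⟨by simp [SS], by simp [SS], by simp only [SS, Function.iterate_zero, id_eq, List.mem_singleton]; rintro v rfl; exact hGpos _ h0, List.isChain_singleton _, by simpa [SS] using h0⟩
  | succ k ih =>
    have : SS G W (k+1) = stp G W (SS G W k) := Function.iterate_succ_apply' _ _ _
    rw [this]
    exact stp_inv hG hGpos hW hWgood ih

lemma SS_succ : SS G W (k+1) = stp G W (SS G W k) := Function.iterate_succ_apply' _ _ _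

lemma SS_len : ∀ k, (SS G W k).length = 2 * k + 1 := by
  intro k
  induction k with
  | zero => simp [SS]
  | succ k ih => rw [SS_succ]; simp [stp, ih]; omega

lemma SS_prefix {k₁ k₂ : ℕ} (h : k₁ ≤ k₂) : (SS G W k₁).reverse <+: (SS G W k₂).reverse := by
  induction k₂ with
  | zero => have : k₁ = 0 := by omega
            simp [this]
  | succ k ih =>
    rcases Nat.eq_or_lt_of_le h with rfl | hlt
    · exact List.prefix_refl _
    · refine (ih (by omega)).trans ?_
      rw [SS_succ]
      show _ <+: (nxb G _ :: nxz G W _ :: SS G W k).reverse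
      simp only [List.reverse_cons, List.append_assoc]
      exact List.prefix_append _ _

noncomputable def ff (G : Set ℕ) (W : ℕ → ℕ → Set ℕ) (j : ℕ) : ℕ :=
  (SS G W j).reverse.getD j 0

lemma ff_eq {j k : ℕ} (h : j ≤ 2 * k) : ff G W j = (SS G W k).reverse.getD j 0 := by
  have hlenj : j < (SS G W j).reverse.length := by rw [List.length_reverse, SS_len]; omega
  have hlenk : j < (SS G W k).reverse.length := by rw [List.length_reverse, SS_len]; omega
  rcases le_total j k with hjk | hjk
  · have hp := SS_prefix (G := G) (W := W) hjk
    rw [ff, List.getD_eq_getElem _ _ hlenj, List.getD_eq_getElem _ _ hlenk]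
    exact hp.getElem hlenj
  · have hp := SS_prefix (G := G) (W := W) hjk
    rw [ff, List.getD_eq_getElem _ _ hlenj, List.getD_eq_getElem _ _ hlenk]
    exact (hp.getElem hlenk).symm

include hG hGpos hW hWgood in
lemma ff_infPath : InfPath c blue (ff G W) := by
  have hinv := SS_inv hG hGpos hW hWgood (W := W)
  refine ⟨?_, ?_, ?_⟩
  · intro j j' hjj
    by_contra hne
    set k := max j j' with hk
    have hj : j ≤ 2 * k := by omega
    have hj' : j' ≤ 2 * k := by omega
    have hlj : j < (SS G W k).reverse.length := by rw [List.length_reverse, SS_len]; omega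
    have hlj' : j' < (SS G W k).reverse.length := by rw [List.length_reverse, SS_len]; omega
    rw [ff_eq hj, ff_eq hj', List.getD_eq_getElem _ _ hlj, List.getD_eq_getElem _ _ hlj'] at hjj
    have hnd : (SS G W k).reverse.Nodup := List.nodup_reverse.mpr (hinv k).2.1
    exact hne ((hnd.getElem_inj_iff).mp hjj)
  · intro j
    have hlj : j < (SS G W j).reverse.length := by rw [List.length_reverse, SS_len]; omega
    have hmem : ff G W j ∈ (SS G W j).reverse := by
      rw [ff, List.getD_eq_getElem _ _ hlj]; exact List.getElem_mem _
    exact (hinv j).2.2.1 _ (List.mem_reverse.mp hmem)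
  · intro j
    set k := j + 1 with hk
    have hch : (SS G W k).reverse.Chain' (fun x y => c x y = blue) := by
      show List.IsChain _ _
      rw [List.isChain_reverse]
      exact (hinv k).2.2.2.1
    have hlj : j + 1 < (SS G W k).reverse.length := by rw [List.length_reverse, SS_len]; omega
    have hlj0 : j < (SS G W k).reverse.length := by omega
    rw [ff_eq (k := k) (by omega), ff_eq (k := k) (by omega),
      List.getD_eq_getElem _ _ hlj0, List.getD_eq_getElem _ _ hlj]
    have := List.isChain_iff_getElem.mp hch j (by rw [List.length_reverse, SS_len]; omega)
    simpa [List.get_eq_getElem] using this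

include hG hGpos hW hWgood in
lemma ff_covers : G ⊆ Set.range (ff G W) := by
  have hsub : ∀ k, ∀ x, x ∈ SS G W k → x ∈ SS G W (k+1) := by
    intro k x hx
    rw [SS_succ]
    exact List.mem_cons_of_mem _ (List.mem_cons_of_mem _ hx)
  have hmu_mem : ∀ k, nxb G (SS G W k) ∈ SS G W (k+1) := by
    intro k; rw [SS_succ]; exact List.mem_cons_self
  have hmono : StrictMono (fun k => nxb G (SS G W k)) := by
    apply strictMono_nat_of_lt_succ
    intro k
    obtain ⟨hG1, hn1⟩ := nxb_spec (hG := hG) (s := SS G W (k+1))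
    have hle : nxb G (SS G W k) ≤ nxb G (SS G W (k+1)) := by
      apply Nat.sInf_le
      exact ⟨hG1, fun hmem => hn1 (hsub k _ hmem)⟩
    have hne : nxb G (SS G W (k+1)) ≠ nxb G (SS G W k) := fun hh => hn1 (hh ▸ hmu_mem k)
    omega
  intro g hg
  have hgin : g ∈ SS G W (g+1) := by
    by_contra hgn
    have h1 : nxb G (SS G W (g+1)) ≤ g := Nat.sInf_le ⟨hg, hgn⟩
    have h2 : g + 1 ≤ nxb G (SS G W (g+1)) := hmono.le_apply
    omega
  have : g ∈ (SS G W (g+1)).reverse := List.mem_reverse.mpr hgin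
  obtain ⟨j, hjl, hjg⟩ := List.mem_iff_getElem.mp this
  rw [List.length_reverse, SS_len] at hjl
  refine ⟨j, ?_⟩
  rw [ff_eq (k := g+1) (by omega), List.getD_eq_getElem _ _ (by rw [List.length_reverse, SS_len]; omega)]
  exact hjg

end constr

open scoped Classical in
noncomputable def dseq (A : Set ℕ) (n : ℕ) : ℝ :=
  (((Finset.Icc 1 n).filter (fun m => m ∈ A)).card : ℝ) / n

lemma upDens_eq (A : Set ℕ) : upDens A = limsup (dseq A) atTop := rfl

lemma dseq_nonneg (A : Set ℕ) (n : ℕ) : 0 ≤ dseq A n := by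
  unfold dseq; positivity

open scoped Classical in
lemma dseq_card_le (A : Set ℕ) (n : ℕ) :
    ((Finset.Icc 1 n).filter (fun m => m ∈ A)).card ≤ n := by
  calc ((Finset.Icc 1 n).filter (fun m => m ∈ A)).card ≤ (Finset.Icc 1 n).card :=
        Finset.card_filter_le _ _
    _ = n := by rw [Nat.card_Icc]; omega

lemma dseq_le_one (A : Set ℕ) (n : ℕ) : dseq A n ≤ 1 := by
  rcases Nat.eq_zero_or_pos n with rfl | hn
  · simp [dseq]
  · unfold dseq
    rw [div_le_one (by exact_mod_cast hn)]
    exact_mod_cast dseq_card_le A n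

lemma dseq_bddAbove (A : Set ℕ) : IsBoundedUnder (· ≤ ·) atTop (dseq A) :=
  isBoundedUnder_of ⟨1, dseq_le_one A⟩

lemma dseq_bddBelow (A : Set ℕ) : IsBoundedUnder (· ≥ ·) atTop (dseq A) :=
  isBoundedUnder_of ⟨0, dseq_nonneg A⟩

lemma dseq_cobdd (A : Set ℕ) : IsCoboundedUnder (· ≤ ·) atTop (dseq A) :=
  (dseq_bddBelow A).isCoboundedUnder_le

lemma dseq_mono {A B : Set ℕ} (h : A ⊆ B) (n : ℕ) : dseq A n ≤ dseq B n := by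
  classical
  unfold dseq
  rcases Nat.eq_zero_or_pos n with rfl | hn
  · simp
  · have hcard : ((Finset.Icc 1 n).filter (fun m => m ∈ A)).card ≤
        ((Finset.Icc 1 n).filter (fun m => m ∈ B)).card :=
      Finset.card_le_card (Finset.monotone_filter_right _ (fun m _ hm => h hm))
    gcongr

lemma upDens_mono {A B : Set ℕ} (h : A ⊆ B) : upDens A ≤ upDens B := by
  rw [upDens_eq, upDens_eq]
  exact limsup_le_limsup (Eventually.of_forall (dseq_mono h)) (dseq_cobdd A) (dseq_bddAbove B)

lemma dseq_union_le (A B : Set ℕ) (n : ℕ) : dseq (A ∪ B) n ≤ dseq A n + dseq B n := by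
  classical
  unfold dseq
  rw [← add_div]
  rcases Nat.eq_zero_or_pos n with rfl | hn
  · simp
  · have hc : ((@Finset.filter ℕ (fun m => m ∈ A ∪ B) (fun a => Classical.propDecidable _) (Finset.Icc 1 n)).card : ℝ) ≤
        (((Finset.Icc 1 n).filter (fun m => m ∈ A)).card : ℝ) +
        (((Finset.Icc 1 n).filter (fun m => m ∈ B)).card : ℝ) := by
      have : (@Finset.filter ℕ (fun m => m ∈ A ∪ B) (fun a => Classical.propDecidable _) (Finset.Icc 1 n)).card ≤
          ((Finset.Icc 1 n).filter (fun m => m ∈ A)).card +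
          ((Finset.Icc 1 n).filter (fun m => m ∈ B)).card := by
        have he : @Finset.filter ℕ (fun m => m ∈ A ∪ B) (fun a => Classical.propDecidable _) (Finset.Icc 1 n) =
            ((Finset.Icc 1 n).filter (fun m => m ∈ A)) ∪ ((Finset.Icc 1 n).filter (fun m => m ∈ B)) := by
          ext m; simp [Set.mem_union, Finset.mem_filter, Finset.mem_union]; tauto
        rw [he]
        exact (Finset.card_union_le _ _)
      exact_mod_cast this
    gcongr

lemma upDens_union_le (A B : Set ℕ) : upDens (A ∪ B) ≤ upDens A + upDens B := by
  rw [upDens_eq, upDens_eq, upDens_eq]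
  have h1 : limsup (dseq (A ∪ B)) atTop ≤ limsup (dseq A + dseq B) atTop := by
    refine limsup_le_limsup (Eventually.of_forall (dseq_union_le A B)) (dseq_cobdd _) ?_
    exact isBoundedUnder_of ⟨2, fun n => by
      have := add_le_add (dseq_le_one A n) (dseq_le_one B n); norm_num at this; simpa using this⟩
  refine h1.trans (limsup_add_le (dseq_bddBelow A) (dseq_bddAbove A) (dseq_cobdd B) (dseq_bddAbove B))

lemma upDens_finite_le_zero {A : Set ℕ} (h : A.Finite) : upDens A ≤ 0 := by
  classical
  rw [upDens_eq]
  set K := h.toFinset.card with hK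
  have hpt : ∀ n, dseq A n ≤ (K : ℝ) / n := by
    intro n
    rcases Nat.eq_zero_or_pos n with rfl | hn
    · simp [dseq]
    · unfold dseq
      have hcard : ((Finset.Icc 1 n).filter (fun m => m ∈ A)).card ≤ K := by
        refine Finset.card_le_card (fun x hx => ?_)
        simp only [Set.Finite.mem_toFinset]
        exact (Finset.mem_filter.mp hx).2
      gcongr <;> first | positivity | exact_mod_cast hcard
  have htend : Tendsto (fun n : ℕ => (K : ℝ) / n) atTop (nhds 0) :=
    tendsto_const_div_atTop_nhds_zero_nat (K : ℝ)
  have hlim : limsup (fun n : ℕ => (K : ℝ) / n) atTop = 0 := htend.limsup_eq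
  calc limsup (dseq A) atTop ≤ limsup (fun n : ℕ => (K : ℝ) / n) atTop :=
        limsup_le_limsup (Eventually.of_forall hpt) (dseq_cobdd _) htend.isBoundedUnder_le
    _ = 0 := hlim

lemma upDens_biUnion_le {ι : Type*} (s : Finset ι) (B : ι → Set ℕ) :
    upDens (⋃ i ∈ s, B i) ≤ ∑ i ∈ s, upDens (B i) := by
  classical
  induction s using Finset.induction_on with
  | empty =>
    simp only [Finset.notMem_empty, Set.iUnion_of_empty, Set.iUnion_empty, Finset.sum_empty]
    exact upDens_finite_le_zero (Set.finite_empty)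
  | insert _ _ hnotmem ih =>
    rename_i a s
    rw [Finset.set_biUnion_insert, Finset.sum_insert hnotmem]
    exact (upDens_union_le _ _).trans (by linarith)

lemma upDens_ge_one {U : Set ℕ} (hU : ∀ m : ℕ, 1 ≤ m → m ∈ U) : (1:ℝ) ≤ upDens U := by
  classical
  rw [upDens_eq]
  have hev : ∀ᶠ n in atTop, dseq U n = 1 := by
    filter_upwards [eventually_ge_atTop 1] with n hn
    unfold dseq
    have hfull : (Finset.Icc 1 n).filter (fun m => m ∈ U) = Finset.Icc 1 n := by
      refine Finset.filter_true_of_mem (fun m hm => hU m (Finset.mem_Icc.mp hm).1)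
    rw [hfull, Nat.card_Icc]
    have : (n + 1 - 1 : ℕ) = n := by omega
    rw [this, div_self (by exact_mod_cast Nat.one_le_iff_ne_zero.mp hn)]
  rw [limsup_congr hev]
  simp [limsup_const]


/-- If a 2-colouring of the complete symmetric digraph on ℕ⁺ has no red directed path
with `r` edges, then there is a blue directed path of upper density at least `1/r`. -/
theorem stmt2 (r : ℕ) (hr : 1 ≤ r) (c : ℕ → ℕ → Bool) (h : NoPathOfLength c red r) :
    ∃ f : ℕ → ℕ, InfPath c blue f ∧ 1 / (r : ℝ) ≤ upDens (Set.range f) := by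
  
  classical
  -- level sets
  set LS : ℕ → Set ℕ := fun i => {v | Level c v i} with hLS
  -- the union of levels contains all positive integers
  have hcover : ∀ m : ℕ, 1 ≤ m → m ∈ ⋃ i ∈ Finset.range r, LS i := by
    intro m hm
    obtain ⟨i, hir, hlev⟩ := exists_level hr h (Nat.lt_of_lt_of_le Nat.zero_lt_one hm)
    exact Set.mem_biUnion (Finset.mem_range.mpr hir) hlev
  have hone : (1:ℝ) ≤ ∑ i ∈ Finset.range r, upDens (LS i) :=
    le_trans (upDens_ge_one hcover) (upDens_biUnion_le _ _)
  have hrpos : (0:ℝ) < r := by exact_mod_cast hr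
  -- some level has density at least 1/r
  have hdense : ∃ i, i < r ∧ 1 / (r:ℝ) ≤ upDens (LS i) := by
    by_contra hcon
    push_neg at hcon
    have hlt : ∑ i ∈ Finset.range r, upDens (LS i) < ∑ _i ∈ Finset.range r, 1 / (r:ℝ) := by
      refine Finset.sum_lt_sum_of_nonempty ?_ ?_
      · exact Finset.nonempty_range_iff.mpr (by omega)
      · intro i hi
        exact hcon i (Finset.mem_range.mp hi)
    rw [Finset.sum_const, Finset.card_range, nsmul_eq_mul, mul_one_div, div_self (ne_of_gt hrpos)] at hlt
    linarith
  obtain ⟨i, hir, hidens⟩ := hdense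
  -- connector candidates
  set Zset : ℕ → Set ℕ := fun a => {z | 0 < z ∧ (∃ j, j ≤ i ∧ Level c z j) ∧ c a z = blue}
    with hZset
  set Bad : Set ℕ := {a | Level c a i ∧ ¬ (Zset a).Infinite} with hBad
  set G : Set ℕ := {a | Level c a i ∧ (Zset a).Infinite} with hG
  -- Bad is finite
  have hBadFin : Bad.Finite := by
    rw [← Set.not_infinite]
    intro hinf
    obtain ⟨l, -, hfp, hlen, -⟩ := greedy_red (c := c) hinf
      (fun a ha => level_pos ha.1) (fun a => Zset a)
      (fun a ha => Set.not_infinite.mp ha.2)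
      (fun a ha w hw hwE hwne => by
        rcases hc : c a w with h0 | h1
        · exact absurd ⟨level_pos hw.1, ⟨i, le_refl i, hw.1⟩, hc⟩ hwE
        · rfl) r
    exact h ⟨l, hfp, hlen⟩
  -- density of G
  have hsub : LS i ⊆ G ∪ Bad := by
    intro a ha
    by_cases hz : (Zset a).Infinite
    · exact Or.inl ⟨ha, hz⟩
    · exact Or.inr ⟨ha, hz⟩
  have hGdens : 1 / (r:ℝ) ≤ upDens G := by
    have h1 : upDens (LS i) ≤ upDens (G ∪ Bad) := upDens_mono hsub
    have h2 : upDens (G ∪ Bad) ≤ upDens G + upDens Bad := upDens_union_le _ _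
    have h3 : upDens Bad ≤ 0 := upDens_finite_le_zero hBadFin
    linarith
  have hGinf : G.Infinite := by
    intro hfin
    have := upDens_finite_le_zero hfin
    have hpos : (0:ℝ) < 1 / (r:ℝ) := by positivity
    linarith
  -- maximum red paths from members of G
  have hPl : ∀ b : ℕ, ∃ l : List ℕ,
      (b ∈ G → (FinPath c red l ∧ l.head? = some b ∧ l.length = i + 1)) ∧ b ∈ l := by
    intro b
    by_cases hb : b ∈ G
    · obtain ⟨l, hl1, hl2, hl3⟩ := hb.1.1
      refine ⟨l, fun _ => ⟨hl1, hl2, hl3⟩, ?_⟩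
      cases l with
      | nil => simp at hl2
      | cons x t =>
        simp only [List.head?_cons, Option.some_inj] at hl2
        exact hl2 ▸ List.mem_cons_self
    · exact ⟨[b], fun hbb => absurd hbb hb, List.mem_singleton.mpr rfl⟩
  choose Pl hPl1 hPl2 using hPl
  set W : ℕ → ℕ → Set ℕ := fun e b => Zset e \ {x | x ∈ Pl b} with hW
  have hGpos : ∀ a ∈ G, 0 < a := fun a ha => level_pos ha.1
  have hWinf : ∀ e ∈ G, ∀ b ∈ G, (W e b).Infinite :=
    fun e he b _ => (he.2).diff (Pl b).finite_toSet
  have hWgood : ∀ e ∈ G, ∀ b ∈ G, ∀ z ∈ W e b,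
      0 < z ∧ c e z = blue ∧ c z b = blue ∧ z ≠ b := by
    intro e he b hb z hz
    obtain ⟨⟨hzpos, ⟨j, hji, hjlev⟩, hez⟩, hznotin⟩ := hz
    obtain ⟨hfp, hhd, hlen⟩ := hPl1 b hb
    refine ⟨hzpos, hez, ?_, ?_⟩
    · exact in_edge_blue hfp hhd hlen hzpos hznotin hji hjlev
    · intro hzb
      exact hznotin (hzb ▸ hPl2 b)
  refine ⟨ff G W, ff_infPath hGinf hGpos hWinf hWgood, ?_⟩
  have hcov : G ⊆ Set.range (ff G W) := ff_covers hGinf hGpos hWinf hWgood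
  exact hGdens.trans (upDens_mono hcov)
end

section
/- Fix a 2-colouring (red/blue) of the complete symmetric digraph on ℕ⁺ with no red directed path of length r. For 0 ≤ i ≤ r-1, let A_i be the set of vertices v such that the longest red directed path starting at v has exactly i edges. Then for every v ∈ A_i, the number of vertices u ∈ A_i such that the edge (u, v) is red is at most i. -/
open Filter

/-- If there is no red directed path of length `r` and `v ∈ A_i`, then the red
indegree of `v` within `A_i` is at most `i`. -/
theorem stmt3 (r : ℕ) (c : ℕ → ℕ → Bool) (h : NoPathOfLength c red r)
    (i : ℕ) (hi : i < r) (v : ℕ) (hv : Level c v i)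
    (S : Finset ℕ) (hS : ∀ u ∈ S, Level c u i ∧ u ≠ v ∧ c u v = red) :
    S.card ≤ i := by
  obtain ⟨l, ⟨hnd, hpos, hch⟩, hhd, hlen⟩ := hv.1
  match l, hhd with
  | a :: t, hhd =>
    simp only [List.head?_cons, Option.some.injEq] at hhd
    subst hhd
    have ht : t.length = i := by simpa using hlen
    have hsub : S ⊆ t.toFinset := by
      intro u hu
      obtain ⟨⟨hpf, hnpf⟩, hne, hred⟩ := hS u hu
      -- u is positive
      obtain ⟨l', ⟨_, hpos', _⟩, hhd', _⟩ := hpf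
      have hu0 : 0 < u := by
        match l', hhd' with
        | b :: t', hhd' =>
          simp only [List.head?_cons, Option.some.injEq] at hhd'
          exact hhd' ▸ hpos' b List.mem_cons_self
      by_contra hut
      rw [List.mem_toFinset] at hut
      apply hnpf
      refine ⟨u :: a :: t, ⟨?_, ?_, ?_⟩, rfl, by simp [ht]⟩
      · exact List.nodup_cons.2 ⟨by simp [hne, hut], hnd⟩
      · intro x hx
        rcases List.mem_cons.1 hx with rfl | hx
        · exact hu0
        · exact hpos x hx
      · exact List.isChain_cons_cons.2 ⟨hred, hch⟩
    calc S.card ≤ t.toFinset.card := Finset.card_le_card hsub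
      _ ≤ t.length := t.toFinset_card_le
      _ = i := ht
end

section
/- Fix a 2-colouring (red/blue) of the complete symmetric digraph on ℕ⁺ with no red directed path of length r, let A_i be the set of vertices from which the longest red directed path has exactly i edges, and suppose A_i is infinite. Then the set B of vertices in A_i that have only finitely many blue out-neighbours inside A_i has cardinality at most i. -/
open Filter

/-- If there is no red directed path of length `r` and `A_i` is infinite, then the set
of vertices of `A_i` with only finitely many blue out-neighbours in `A_i` has at most
`i` elements. -/
theorem stmt4 (r : ℕ) (c : ℕ → ℕ → Bool) (h : NoPathOfLength c red r)
    (i : ℕ) (hi : i < r) (hinf : {v | Level c v i}.Infinite)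
    (S : Finset ℕ)
    (hS : ∀ v ∈ S, Level c v i ∧ {u | Level c u i ∧ u ≠ v ∧ c v u = blue}.Finite) :
    S.card ≤ i := by
  classical
  by_contra hlt
  push_neg at hlt
  -- the finite set of vertices to avoid
  have hfin : ((↑S : Set ℕ) ∪ ⋃ v ∈ S, {u | Level c u i ∧ u ≠ v ∧ c v u = blue}).Finite :=
    Set.Finite.union S.finite_toSet
      (Set.Finite.biUnion S.finite_toSet (fun v hv => (hS v hv).2))
  obtain ⟨u, huA, huT⟩ := (hinf.diff hfin).nonempty
  have huS : u ∉ S := fun hus => huT (Or.inl hus)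
  obtain ⟨l, hl, hhead, hlen⟩ := huA.1
  have hul : u ∈ l := List.mem_of_mem_head? hhead
  -- there is some v ∈ S not on the path l
  have hv : ∃ v ∈ S, v ∉ l := by
    by_contra hall
    push_neg at hall
    have hsub : S ⊆ l.toFinset.erase u := by
      intro v hvS
      exact Finset.mem_erase.2 ⟨fun hvu => huS (hvu ▸ hvS), List.mem_toFinset.2 (hall v hvS)⟩
    have hcard : S.card ≤ (l.toFinset.erase u).card := Finset.card_le_card hsub
    have h1 : (l.toFinset.erase u).card ≤ l.toFinset.card - 1 :=
      le_of_eq (Finset.card_erase_of_mem (List.mem_toFinset.2 hul))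
    have h2 : l.toFinset.card ≤ l.length := l.toFinset_card_le
    omega
  obtain ⟨v, hvS, hvl⟩ := hv
  obtain ⟨hvLevel, _⟩ := hS v hvS
  -- the edge v → u is red
  have hvu : u ≠ v := fun huv => huS (huv ▸ hvS)
  have hred : c v u = red := by
    have hnb : u ∉ ⋃ v ∈ S, {u | Level c u i ∧ u ≠ v ∧ c v u = blue} :=
      fun hb => huT (Or.inr hb)
    have : ¬ (Level c u i ∧ u ≠ v ∧ c v u = blue) := by
      intro hcon
      exact hnb (Set.mem_biUnion hvS hcon)
    have hcb : c v u ≠ blue := fun hb => this ⟨huA, hvu, hb⟩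
    unfold red blue at *
    cases hcvu : c v u
    · exact absurd hcvu hcb
    · rfl
  -- v is positive
  have hvpos : 0 < v := by
    obtain ⟨l', ⟨_, hpos', _⟩, hhead', _⟩ := hvLevel.1
    exact hpos' v (List.mem_of_mem_head? hhead')
  -- build the red path v :: l of length i+1 from v
  apply hvLevel.2
  refine ⟨v :: l, ⟨?_, ?_, ?_⟩, rfl, by simp [hlen]⟩
  · exact List.nodup_cons.2 ⟨hvl, hl.1⟩
  · intro w hw
    rcases List.mem_cons.1 hw with rfl | hw'
    · exact hvpos
    · exact hl.2.1 w hw'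
  · refine List.isChain_cons.2 ⟨?_, hl.2.2⟩
    intro y hy
    rw [hhead] at hy
    cases hy
    exact hred
end

section
/- Let A be an infinite subset of ℕ⁺ with a 2-colouring of the complete symmetric digraph on A such that every vertex of A has infinitely many blue out-neighbours in A, and there is a constant C such that every vertex of A has at most C red in-neighbours in A. Then there exists a blue directed path containing every vertex of A; in particular this path has upper density equal to the upper density of A. -/
open Filter

/-- If every vertex of an infinite set `A ⊆ ℕ⁺` has infinitely many blue out-neighbours
in `A` and at most `C` red in-neighbours in `A`, then there is a blue directed path
containing every vertex of `A`, of upper density equal to that of `A`. -/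
theorem stmt5 (A : Set ℕ) (hA : A.Infinite) (hpos : ∀ a ∈ A, 0 < a)
    (c : ℕ → ℕ → Bool)
    (hblue : ∀ v ∈ A, {u | u ∈ A ∧ u ≠ v ∧ c v u = blue}.Infinite)
    (C : ℕ)
    (hred : ∀ v ∈ A, {u | u ∈ A ∧ u ≠ v ∧ c u v = red}.Finite ∧
      {u | u ∈ A ∧ u ≠ v ∧ c u v = red}.ncard ≤ C) :
    ∃ f : ℕ → ℕ, Function.Injective f ∧ (∀ j, c (f j) (f (j + 1)) = blue) ∧
      A ⊆ Set.range f ∧ upDens (Set.range f) = upDens A := by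
  classical
  -- connection lemma
  have hconn : ∀ v ∈ A, ∀ a ∈ A, ∀ l : List ℕ, a ≠ v →
      ∃ u, u ∈ A ∧ u ∉ l ∧ u ≠ a ∧ u ≠ v ∧ c v u = blue ∧ c u a = blue := by
    intro v hv a ha l hav
    have h1 := hblue v hv
    have h2 := (hred a ha).1
    have hinf : ({u | u ∈ A ∧ u ≠ v ∧ c v u = blue} \
        (({u | u ∈ A ∧ u ≠ a ∧ c u a = red} ∪ {a}) ∪ {x | x ∈ l})).Infinite :=
      h1.diff (((h2.union (Set.finite_singleton a)).union (List.finite_toSet l)))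
    obtain ⟨u, hu1, hu2⟩ := hinf.nonempty
    obtain ⟨huA, huv, hcvu⟩ := hu1
    simp only [Set.mem_union, Set.mem_setOf_eq, Set.mem_singleton_iff, not_or] at hu2
    obtain ⟨⟨hured, hua⟩, hul⟩ := hu2
    refine ⟨u, huA, hul, hua, huv, hcvu, ?_⟩
    by_cases h : c u a = red
    · exact absurd ⟨huA, hua, h⟩ hured
    · revert h
      unfold red blue
      cases c u a <;> simp
  -- invariant
  set Inv : List ℕ → Prop := fun l =>
    l ≠ [] ∧ l.Nodup ∧ (∀ x ∈ l, x ∈ A) ∧ l.Chain' (fun x y => c x y = blue) with hInvdef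
  -- key extension step
  have key : ∀ l : List ℕ, Inv l → ∃ l' : List ℕ, Inv l' ∧ l <+: l' ∧
      ∃ m, m ∈ l' ∧ m ∉ l ∧ m ∈ A ∧ ∀ m' ∈ A, m' ∉ l → m ≤ m' := by
    rintro l ⟨hne, hnd, hmem, hch⟩
    have hex : ∃ m, m ∈ A ∧ m ∉ l := by
      obtain ⟨m, hm⟩ := (hA.diff (List.finite_toSet l)).nonempty
      exact ⟨m, hm.1, hm.2⟩
    set m := Nat.find hex with hmdef
    obtain ⟨hmA, hml⟩ := Nat.find_spec hex
    set v := l.getLast hne with hvdef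
    have hvl : v ∈ l := List.getLast_mem hne
    have hvA : v ∈ A := hmem _ hvl
    have hmv : m ≠ v := fun h => hml (by rw [← hmdef, h]; exact hvl)
    obtain ⟨u, huA, hul, hum, huv, hcvu, hcum⟩ := hconn v hvA m hmA l hmv
    refine ⟨l ++ [u, m], ⟨by simp, ?_, ?_, ?_⟩, ⟨[u, m], rfl⟩,
      m, by simp, hml, hmA, fun m' h1 h2 => Nat.find_min' hex ⟨h1, h2⟩⟩
    · rw [List.nodup_append]
      refine ⟨hnd, by simp [hum], ?_⟩
      intro x hx
      simp only [List.mem_cons, List.not_mem_nil, or_false]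
      rintro _ (rfl | rfl) rfl
      · exact hul hx
      · exact hml hx
    · intro x hx
      rcases List.mem_append.1 hx with h | h
      · exact hmem _ h
      · rcases List.mem_cons.1 h with rfl | h
        · exact huA
        · rcases List.mem_cons.1 h with rfl | h
          · exact hmA
          · simp at h
    · unfold List.Chain'; rw [List.isChain_append]
      refine ⟨hch, by simpa using hcum, ?_⟩
      intro x hx y hy
      rw [List.getLast?_eq_getLast hne] at hx
      simp only [Option.mem_def, Option.some.injEq] at hx hy
      rw [← hx]
      have : y = u := by simpa using hy.symm
      rw [this]
      exact hcvu
  -- base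
  obtain ⟨a0, ha0⟩ := hA.nonempty
  have inv0 : Inv [a0] := ⟨by simp, by simp, by simpa, List.isChain_singleton _⟩
  -- choose extension data
  choose step hstepInv hsteppre mfn hm1 hm2 hm3 hm4 using key
  -- the sequence of paths
  set s : ℕ → {l : List ℕ // Inv l} := fun n =>
    Nat.rec ⟨[a0], inv0⟩ (fun _ p => ⟨step p.1 p.2, hstepInv p.1 p.2⟩) n with hsdef
  set L : ℕ → List ℕ := fun n => (s n).1 with hLdef
  have hLsucc : ∀ n, L (n + 1) = step (L n) (s n).2 := fun n => rfl
  have hLInv : ∀ n, Inv (L n) := fun n => (s n).2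
  have hLpre1 : ∀ n, L n <+: L (n + 1) := fun n => hsteppre (L n) (s n).2
  have hLpre : ∀ {j k : ℕ}, j ≤ k → L j <+: L k := by
    intro j k hjk
    induction k with
    | zero => simpa [Nat.le_zero.1 hjk]
    | succ k ih =>
      rcases Nat.lt_or_ge j (k + 1) with h | h
      · exact (ih (Nat.lt_succ_iff.1 h)).trans (hLpre1 k)
      · have : j = k + 1 := le_antisymm hjk h
        simp [this]
  have hLlen : ∀ n, n < (L n).length := by
    intro n
    induction n with
    | zero =>
      have := (hLInv 0).1
      have : 0 < (L 0).length := List.length_pos_iff.2 this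
      omega
    | succ n ih =>
      have : (L n).length ≤ (L (n + 1)).length := (hLpre1 n).length_le
      -- need strict growth: step adds two elements
      have hgrow : (L n).length < (L (n + 1)).length := by
        have hm1' : mfn (L n) (s n).2 ∈ L (n + 1) := by
          rw [hLsucc n]; exact hm1 _ _
        have hne : L (n + 1) ≠ L n := by
          intro h
          rw [h] at hm1'
          exact hm2 (L n) (s n).2 hm1'
        rcases (hLpre1 n).length_le.lt_or_eq with h | h
        · exact h
        · exact absurd ((hLpre1 n).eq_of_length h) (fun hh => hne hh.symm)
      omega
  -- the enumeration
  set f : ℕ → ℕ := fun j => (L j).getD j 0 with hfdef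
  have hf : ∀ j k (h : j ≤ k), f j = (L k)[j]'(lt_of_le_of_lt h (hLlen k)) := by
    intro j k h
    have hj : j < (L j).length := hLlen j
    have := (hLpre h).getElem hj
    rw [hfdef]
    simp only
    rw [List.getD_eq_getElem _ _ hj, this]
  -- injectivity
  have hinj : Function.Injective f := by
    intro i j hij
    rcases le_total i j with h | h
    · rw [hf i j h, hf j j le_rfl] at hij
      exact ((hLInv j).2.1.getElem_inj_iff).1 hij
    · rw [hf i i le_rfl, hf j i h] at hij
      exact ((hLInv i).2.1.getElem_inj_iff).1 hij
  -- chain property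
  have hchain : ∀ j, c (f j) (f (j + 1)) = blue := by
    intro j
    have h1 : f j = (L (j + 1))[j]'(lt_of_le_of_lt (Nat.le_succ j) (hLlen (j + 1))) :=
      hf j (j + 1) (Nat.le_succ j)
    have h2 : f (j + 1) = (L (j + 1))[j + 1]'(hLlen (j + 1)) := hf (j + 1) (j + 1) le_rfl
    have hch := (hLInv (j + 1)).2.2.2
    unfold List.Chain' at hch; rw [List.isChain_iff_getElem] at hch
    have hlt : j < (L (j + 1)).length - 1 := by
      have := hLlen (j + 1)
      omega
    have := hch j (by omega)
    rw [h1, h2]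
    exact this
  -- range f ⊆ A
  have hrangeA : ∀ j, f j ∈ A := by
    intro j
    rw [hf j j le_rfl]
    exact (hLInv j).2.2.1 _ (List.getElem_mem _)
  -- the least-missing sequence
  set M : ℕ → ℕ := fun n => mfn (L n) (s n).2 with hMdef
  have hMmono : StrictMono M := by
    apply strictMono_nat_of_lt_succ
    intro n
    have h1 : M n ∈ L (n + 1) := by rw [hLsucc n]; exact hm1 (L n) (s n).2
    have h2 : M (n + 1) ∉ L (n + 1) := hm2 (L (n + 1)) (s (n + 1)).2
    have h3 : M (n + 1) ∈ A := hm3 (L (n + 1)) (s (n + 1)).2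
    have h4 : M (n + 1) ∉ L n := fun h => h2 ((hLpre1 n).subset h)
    have hle : M n ≤ M (n + 1) := hm4 (L n) (s n).2 _ h3 h4
    rcases hle.lt_or_eq with h | h
    · exact h
    · exact absurd (h ▸ h1) h2
  have hcover : ∀ a ∈ A, a ∈ L (a + 1) := by
    intro a haA
    by_contra h
    have h1 : M (a + 1) ≤ a := hm4 (L (a + 1)) (s (a + 1)).2 a haA h
    have h2 : a + 1 ≤ M (a + 1) := hMmono.le_apply
    omega
  -- A ⊆ range f
  have hArange : A ⊆ Set.range f := by
    intro a haA
    obtain ⟨i, hi, hia⟩ := List.mem_iff_getElem.1 (hcover a haA)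
    refine ⟨i, ?_⟩
    rcases le_total i (a + 1) with h | h
    · rw [hf i (a + 1) h]; exact hia
    · rw [hf i i le_rfl, ← hia]
      exact ((hLpre h).getElem hi).symm
  have hfeq : Set.range f = A := by
    apply Set.eq_of_subset_of_subset
    · rintro _ ⟨j, rfl⟩; exact hrangeA j
    · exact hArange
  exact ⟨f, hinj, hchain, hArange, by rw [hfeq]⟩
end

section
/- Let r ≥ 1 and define a 2-colouring c_r of the complete symmetric digraph on ℕ⁺ as follows: partition ℕ⁺ into residue classes A₁,...,A_r modulo r; if m, n lie in the same class, colour both (m,n) and (n,m) blue; if m ∈ A_i, n ∈ A_j with i < j, colour (m,n) blue and (n,m) red. Then in c_r the longest red directed path has exactly r - 1 edges, and every blue directed path has upper density at most 1/r. -/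
open Filter

/-- Index of the residue class of `m` modulo `r`, where class `A_i` (`1 ≤ i ≤ r`)
consists of the `n` with `n ≡ i (mod r)` (so residue `0` is class `A_r`). -/
def idx (r m : ℕ) : ℕ := if m % r = 0 then r else m % r

/-- The extremal colouring `c_r`: within a residue class both edges are blue; between
classes `A_i`, `A_j` with `i < j` the edge from `A_i` to `A_j` is blue and the
edge from `A_j` to `A_i` is red. -/
def cExtr (r : ℕ) (m n : ℕ) : Bool := if idx r m ≤ idx r n then blue else red

section Aux

lemma idx_pos (r m : ℕ) (hr : 1 ≤ r) : 1 ≤ idx r m := by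
  unfold idx; split <;> omega

lemma idx_le (r m : ℕ) (hr : 1 ≤ r) : idx r m ≤ r := by
  unfold idx; split
  · exact le_refl r
  · exact le_of_lt (Nat.mod_lt _ hr)

lemma idx_of_le (r v : ℕ) (h1 : 1 ≤ v) (h2 : v ≤ r) : idx r v = v := by
  unfold idx; split
  · rename_i h
    rcases Nat.lt_or_ge v r with hv | hv
    · rw [Nat.mod_eq_of_lt hv] at h; omega
    · omega
  · rename_i h
    have hv : v < r := by
      rcases Nat.lt_or_ge v r with hv | hv
      · exact hv
      · have : v = r := le_antisymm h2 hv
        subst this; simp [Nat.mod_self] at h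
    exact Nat.mod_eq_of_lt hv

lemma cExtr_red_iff (r m n : ℕ) : cExtr r m n = red ↔ idx r n < idx r m := by
  unfold cExtr red blue
  split <;> simp_all

lemma cExtr_blue_iff (r m n : ℕ) : cExtr r m n = blue ↔ idx r m ≤ idx r n := by
  unfold cExtr red blue
  split <;> simp_all

lemma count_residue (r s n : ℕ) (_hr : 1 ≤ r) :
    ((Finset.Icc 1 n).filter (fun m => m % r = s)).card ≤ n / r + 1 := by
  have : ((Finset.Icc 1 n).filter (fun m => m % r = s)).card
      ≤ (Finset.range (n / r + 1)).card := by
    apply Finset.card_le_card_of_injOn (fun m => m / r)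
    · intro m hm
      simp only [Finset.coe_filter, Finset.mem_coe, Finset.mem_filter, Finset.mem_Icc, Set.mem_setOf_eq] at hm
      simp only [Finset.coe_range, Set.mem_Iio, Finset.mem_range]
      have : m / r ≤ n / r := Nat.div_le_div_right hm.1.2
      omega
    · intro a ha b hb hab
      simp only [Finset.coe_filter, Set.mem_setOf_eq, Finset.mem_Icc] at ha hb
      have hab' : a / r = b / r := hab
      calc a = r * (a / r) + a % r := (Nat.div_add_mod a r).symm
        _ = r * (b / r) + b % r := by rw [hab', ha.2, hb.2]
        _ = b := Nat.div_add_mod b r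
  simpa using this

end Aux

/-- In the extremal colouring `c_r`, the longest red directed path has exactly `r-1`
edges, and every blue directed path has upper density at most `1/r`. -/
theorem stmt6 (r : ℕ) (hr : 1 ≤ r) :
    (∃ l : List ℕ, FinPath (cExtr r) red l ∧ l.length = r) ∧
    NoPathOfLength (cExtr r) red r ∧
    (∀ f : ℕ → ℕ, InfPath (cExtr r) blue f →
      upDens (Set.range f) ≤ 1 / (r : ℝ)) := by
  classical
  refine ⟨?_, ?_, ?_⟩
  · -- a red path with r vertices
    obtain ⟨r', rfl⟩ : ∃ r', r = r' + 1 := ⟨r - 1, by omega⟩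
    refine ⟨(List.range (r' + 1)).map (fun k => r' + 1 - k), ⟨?_, ?_, ?_⟩, by simp⟩
    · apply List.Nodup.map_on _ List.nodup_range
      intro x hx y hy h
      simp only [List.mem_range] at hx hy
      omega
    · intro v hv
      simp only [List.mem_map, List.mem_range] at hv
      obtain ⟨k, hk, rfl⟩ := hv
      omega
    · simp only [List.Chain']
      rw [List.isChain_map, List.isChain_range_succ]
      intro m hm
      rw [cExtr_red_iff]
      rw [idx_of_le _ _ (by omega) (by omega), idx_of_le _ _ (by omega) (by omega)]
      omega
  · -- no red path with r+1 vertices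
    rintro ⟨l, ⟨hnd, hpos, hch⟩, hlen⟩
    have hch' : (l.map (idx r)).Chain' (· > ·) := by
      simp only [List.Chain'] at hch ⊢
      rw [List.isChain_map]
      exact hch.imp (fun a b h => (cExtr_red_iff r a b).1 h)
    have hp : (l.map (idx r)).Pairwise (· > ·) := List.isChain_iff_pairwise.mp hch'
    have hnd' : (l.map (idx r)).Nodup := hp.imp (fun h => ne_of_gt h)
    have hsub : (l.map (idx r)).toFinset ⊆ Finset.Icc 1 r := by
      intro x hx
      rw [List.mem_toFinset] at hx
      simp only [List.mem_map] at hx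
      obtain ⟨v, hv, rfl⟩ := hx
      simp only [Finset.mem_Icc]
      exact ⟨idx_pos r v hr, idx_le r v hr⟩
    have hcard : (l.map (idx r)).toFinset.card ≤ r := by
      simpa using Finset.card_le_card hsub
    rw [List.toFinset_card_of_nodup hnd'] at hcard
    simp only [List.length_map, hlen] at hcard
    omega
  · -- blue paths have upper density at most 1/r
    rintro f ⟨hinj, hpos, hcol⟩
    have hrR : (0 : ℝ) < r := by exact_mod_cast hr
    set g : ℕ → ℕ := fun j => idx r (f j) with hg
    have hmono : Monotone g :=
      monotone_nat_of_le_succ (fun j => (cExtr_blue_iff r _ _).1 (hcol j))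
    have hbdd : BddAbove (Set.range g) :=
      ⟨r, by rintro _ ⟨j, rfl⟩; exact idx_le r (f j) hr⟩
    obtain ⟨J, hJ⟩ := Nat.sSup_mem (Set.range_nonempty g) hbdd
    have hstab : ∀ j, J ≤ j → g j = g J := fun j hj =>
      le_antisymm (hJ ▸ le_csSup hbdd ⟨j, rfl⟩) (hmono hj)
    set s := g J % r with hs
    -- counting bound
    have hcount : ∀ n : ℕ,
        ((Finset.Icc 1 n).filter (fun m => m ∈ Set.range f)).card ≤ J + (n / r + 1) := by
      intro n
      have hsubset : (Finset.Icc 1 n).filter (fun m => m ∈ Set.range f)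
          ⊆ ((Finset.range J).image f) ∪ ((Finset.Icc 1 n).filter (fun m => m % r = s)) := by
        intro m hm
        rw [Finset.mem_filter] at hm
        obtain ⟨hmIcc, j, rfl⟩ := hm
        rcases lt_or_ge j J with hj | hj
        · exact Finset.mem_union_left _ (Finset.mem_image.2 ⟨j, Finset.mem_range.2 hj, rfl⟩)
        · refine Finset.mem_union_right _ (Finset.mem_filter.2 ⟨hmIcc, ?_⟩)
          have hgj : idx r (f j) = g J := hstab j hj
          rw [hs]
          by_cases h0 : f j % r = 0
          · have : idx r (f j) = r := by unfold idx; simp [h0]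
            rw [← hgj, this]
            simp [h0, Nat.mod_self]
          · have hlt : f j % r < r := Nat.mod_lt _ hr
            have : idx r (f j) = f j % r := by unfold idx; simp [h0]
            rw [← hgj, this, Nat.mod_eq_of_lt hlt]
      calc ((Finset.Icc 1 n).filter (fun m => m ∈ Set.range f)).card
          ≤ (((Finset.range J).image f) ∪
              ((Finset.Icc 1 n).filter (fun m => m % r = s))).card :=
            Finset.card_le_card hsubset
        _ ≤ ((Finset.range J).image f).card
              + ((Finset.Icc 1 n).filter (fun m => m % r = s)).card :=
            Finset.card_union_le _ _
        _ ≤ J + (n / r + 1) := by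
            gcongr
            · simpa using Finset.card_image_le (s := Finset.range J) (f := f)
            · exact count_residue r s n hr
    -- real bound: eventually dominated by (J+1)/n + 1/r
    have hle : ∀ᶠ n : ℕ in atTop,
        (((Finset.Icc 1 n).filter (fun m => m ∈ Set.range f)).card : ℝ) / n
          ≤ (J + 1 : ℝ) / n + 1 / r := by
      filter_upwards [eventually_ge_atTop 1] with n hn
      have hnR : (0 : ℝ) < n := by exact_mod_cast hn
      have h1 : (((Finset.Icc 1 n).filter (fun m => m ∈ Set.range f)).card : ℝ)
          ≤ (J + 1 : ℝ) + ((n / r : ℕ) : ℝ) := by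
        have h : (((Finset.Icc 1 n).filter (fun m => m ∈ Set.range f)).card : ℝ)
            ≤ ((J + (n / r + 1) : ℕ) : ℝ) := by exact_mod_cast hcount n
        push_cast at h
        linarith
      have h2 : (((n / r : ℕ) : ℝ)) / n ≤ 1 / r := by
        have hd : ((n / r : ℕ) : ℝ) ≤ (n : ℝ) / r := Nat.cast_div_le
        have : ((n / r : ℕ) : ℝ) / n ≤ ((n : ℝ) / r) / n := by gcongr
        calc ((n / r : ℕ) : ℝ) / n ≤ ((n : ℝ) / r) / n := this
          _ = 1 / r := by field_simp
      calc (((Finset.Icc 1 n).filter (fun m => m ∈ Set.range f)).card : ℝ) / n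
          ≤ ((J + 1 : ℝ) + ((n / r : ℕ) : ℝ)) / n := by gcongr
        _ = (J + 1 : ℝ) / n + ((n / r : ℕ) : ℝ) / n := by ring
        _ ≤ (J + 1 : ℝ) / n + 1 / r := by gcongr
    -- the dominating sequence tends to 1/r
    have htend : Tendsto (fun n : ℕ => (J + 1 : ℝ) / n + 1 / r) atTop (nhds (1 / r)) := by
      have h0 : Tendsto (fun n : ℕ => (J + 1 : ℝ) / n) atTop (nhds 0) :=
        tendsto_const_div_atTop_nhds_zero_nat _
      simpa using h0.add (tendsto_const_nhds (x := (1 / r : ℝ)))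
    have hbw : IsBoundedUnder (· ≤ ·) atTop (fun n : ℕ => (J + 1 : ℝ) / n + 1 / r) :=
      htend.isBoundedUnder_le
    have hcb : IsCoboundedUnder (· ≤ ·) atTop
        (fun n : ℕ => (((Finset.Icc 1 n).filter (fun m => m ∈ Set.range f)).card : ℝ) / n) := by
      apply isCoboundedUnder_le_of_le atTop (x := 0)
      intro n
      exact div_nonneg (Nat.cast_nonneg _) (Nat.cast_nonneg _)
    have := limsup_le_limsup hle hcb hbw
    rw [htend.limsup_eq] at this
    exact le_trans (le_of_eq rfl) this
end

section
/- In the colouring c_r of the complete symmetric digraph on ℕ⁺ (both edges blue within a residue class mod r; between classes A_i and A_j with i < j, the edge from A_i to A_j is blue and the edge from A_j to A_i is red), every blue directed path has infinite intersection with at most one of the residue classes A₁, ..., A_r. -/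
open Filter

/-- In the extremal colouring `c_r`, every blue directed path has infinite
intersection with at most one of the residue classes modulo `r`. -/
theorem stmt7 (r : ℕ) (hr : 1 ≤ r) (f : ℕ → ℕ) (hf : InfPath (cExtr r) blue f)
    (i j : ℕ)
    (hi : {n | n ∈ Set.range f ∧ idx r n = i}.Infinite)
    (hj : {n | n ∈ Set.range f ∧ idx r n = j}.Infinite) :
    i = j := by
  obtain ⟨hinj, hpos, hcol⟩ := hf
  have hmono : Monotone (fun k => idx r (f k)) := by
    apply monotone_nat_of_le_succ
    intro k
    have h := hcol k
    by_contra hle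
    rw [cExtr, if_neg hle] at h
    exact absurd h (by simp [red, blue])
  have key : ∀ m : ℕ, {n | n ∈ Set.range f ∧ idx r n = m}.Infinite →
      {k : ℕ | idx r (f k) = m}.Infinite := by
    intro m hm
    have hsub : {n | n ∈ Set.range f ∧ idx r n = m} ⊆
        f '' {k : ℕ | idx r (f k) = m} := by
      rintro n ⟨⟨k, rfl⟩, hk⟩
      exact ⟨k, hk, rfl⟩
    exact Set.Infinite.of_image f (hm.mono hsub)
  have hi' := key i hi
  have hj' := key j hj
  have h1 : ∀ (a b : ℕ), idx r (f a) = i → idx r (f b) = j →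
      {k : ℕ | idx r (f k) = j}.Infinite → i ≤ j := by
    intro a b ha hb hinf
    obtain ⟨c, hc, hac⟩ := hinf.exists_gt a
    calc i = idx r (f a) := ha.symm
    _ ≤ idx r (f c) := hmono hac.le
    _ = j := hc
  obtain ⟨a, ha⟩ := hi'.nonempty
  obtain ⟨b, hb⟩ := hj'.nonempty
  have h2 : ∀ (a b : ℕ), idx r (f a) = j → idx r (f b) = i →
      {k : ℕ | idx r (f k) = i}.Infinite → j ≤ i := by
    intro a b ha hb hinf
    obtain ⟨c, hc, hac⟩ := hinf.exists_gt a
    calc j = idx r (f a) := ha.symm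
    _ ≤ idx r (f c) := hmono hac.le
    _ = i := hc
  exact le_antisymm (h1 a b ha hb hj') (h2 b a hb ha hi')
end

section
/- Let P = {p_j} and Q = {q_k} be infinite blue directed paths on disjoint vertex sets in a 2-coloured complete symmetric digraph on ℕ⁺, such that every edge from a vertex of P to a vertex of Q is blue, and suppose there is an infinite matching M of blue edges from vertices of Q to vertices of P. Then there exists a blue directed path S whose vertex set contains all vertices of P and all vertices of Q; in particular, the upper density of S is at least the upper density of V(P) ∪ V(Q). -/
open Filter

/-- shift with 0 prepended -/
def shf (u : ℕ → ℕ) : ℕ → ℕ := fun t => match t with | 0 => 0 | s + 1 => u s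

lemma shf_zero (u : ℕ → ℕ) : shf u 0 = 0 := rfl
lemma shf_succ (u : ℕ → ℕ) (s : ℕ) : shf u (s + 1) = u s := rfl

lemma shf_lt {u : ℕ → ℕ} (hu : StrictMono u) (hu0 : 1 ≤ u 0) (t : ℕ) : shf u t < u t := by
  cases t with
  | zero => rw [shf_zero]; omega
  | succ s => simpa [shf_succ] using hu (Nat.lt_succ_self s)

lemma le_shf {u : ℕ → ℕ} (hu : StrictMono u) {s t : ℕ} (h : s < t) : u s ≤ shf u t := by
  cases t with
  | zero => omega
  | succ r => rw [shf_succ]; exact hu.monotone (by omega)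

lemma splice (c : ℕ → ℕ → Bool) (f g : ℕ → ℕ)
    (hf : InfPath c blue f) (hg : InfPath c blue g)
    (hdisj : Disjoint (Set.range f) (Set.range g))
    (hPQ : ∀ j k, c (f j) (g k) = blue)
    (u v : ℕ → ℕ) (hu : StrictMono u) (hv : StrictMono v)
    (hu0 : 1 ≤ u 0) (hv0 : 1 ≤ v 0)
    (hmatch : ∀ t, c (g (v t - 1)) (f (u t)) = blue) :
    ∃ p : ℕ → ℕ, InfPath c blue p ∧ Set.range f ∪ Set.range g ⊆ Set.range p := by
  classical
  have hEx : ∀ m : ℕ, ∃ t, m < u t + v t := by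
    intro m
    refine ⟨m, ?_⟩
    have h1 : m ≤ u m := hu.le_apply
    have h2 : 0 < v m := lt_of_lt_of_le hv0 (hv.monotone (Nat.zero_le m))
    omega
  set T : ℕ → ℕ := fun m => Nat.find (hEx m) with hTdef
  set p : ℕ → ℕ := fun m =>
    if m < u (T m) + shf v (T m) then f (m - shf v (T m)) else g (m - u (T m)) with hpdef
  have hp : ∀ m, p m =
      if m < u (T m) + shf v (T m) then f (m - shf v (T m)) else g (m - u (T m)) :=
    fun m => rfl
  have hT1 : ∀ m, m < u (T m) + v (T m) := fun m => Nat.find_spec (hEx m)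
  have hT2 : ∀ m, shf u (T m) + shf v (T m) ≤ m := by
    intro m
    rcases h : T m with _ | s
    · simp [shf_zero]
    · have hs : s < Nat.find (hEx m) := by
        show s < T m ; omega
      have := Nat.find_min (hEx m) hs
      simp only [shf_succ]; omega
  have hTspec : ∀ t m, shf u t + shf v t ≤ m → m < u t + v t → T m = t := by
    intro t m h1 h2
    have hle : T m ≤ t := Nat.find_min' (hEx m) h2
    rcases lt_or_eq_of_le hle with hlt | he
    · exfalso
      have h3 := hT1 m
      have h4 : u (T m) ≤ shf u t := le_shf hu hlt
      have h5 : v (T m) ≤ shf v t := le_shf hv hlt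
      omega
    · exact he
  have hpf : ∀ t m, shf u t + shf v t ≤ m → m < u t + shf v t → p m = f (m - shf v t) := by
    intro t m h1 h2
    have hvt := shf_lt hv hv0 t
    have hT : T m = t := hTspec t m h1 (by omega)
    rw [hp m, hT, if_pos h2]
  have hpg : ∀ t m, u t + shf v t ≤ m → m < u t + v t → p m = g (m - u t) := by
    intro t m h1 h2
    have hut := shf_lt hu hu0 t
    have hT : T m = t := hTspec t m (by omega) h2
    rw [hp m, hT, if_neg (by omega)]
  -- basic bounds for the f-branch index
  have hfg_ne : ∀ i k, f i ≠ g k := by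
    intro i k he
    exact Set.disjoint_left.mp hdisj (Set.mem_range_self i) ⟨k, he.symm⟩
  refine ⟨p, ⟨?_, ?_, ?_⟩, ?_⟩
  · -- injectivity
    intro m m' hpp
    have h1 := hT1 m; have h2 := hT2 m
    have h1' := hT1 m'; have h2' := hT2 m'
    have hvt := shf_lt hv hv0 (T m); have hut := shf_lt hu hu0 (T m)
    have hvt' := shf_lt hv hv0 (T m'); have hut' := shf_lt hu hu0 (T m')
    rw [hp m, hp m'] at hpp
    by_cases hA : m < u (T m) + shf v (T m)
    · by_cases hB : m' < u (T m') + shf v (T m')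
      · rw [if_pos hA, if_pos hB] at hpp
        have hi := hf.1 hpp
        have hTT : T m = T m' := by
          rcases lt_trichotomy (T m) (T m') with h | h | h
          · have := le_shf hu h; omega
          · exact h
          · have := le_shf hu h; omega
        rw [hTT] at hi h2 hA h1 hvt hut; omega
      · rw [if_pos hA, if_neg hB] at hpp
        exact absurd hpp (hfg_ne _ _)
    · by_cases hB : m' < u (T m') + shf v (T m')
      · rw [if_neg hA, if_pos hB] at hpp
        exact absurd hpp.symm (hfg_ne _ _)
      · rw [if_neg hA, if_neg hB] at hpp
        have hi := hg.1 hpp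
        have hTT : T m = T m' := by
          rcases lt_trichotomy (T m) (T m') with h | h | h
          · have := le_shf hv h; omega
          · exact h
          · have := le_shf hv h; omega
        rw [hTT] at hi h2 hA h1 hvt hut; omega
  · -- positivity
    intro m
    rw [hp m]
    split
    · exact hf.2.1 _
    · exact hg.2.1 _
  · -- chain
    intro m
    set t := T m with ht
    have h1 : m < u t + v t := hT1 m
    have h2 : shf u t + shf v t ≤ m := hT2 m
    have hvt := shf_lt hv hv0 t; have hut := shf_lt hu hu0 t
    by_cases hA : m + 1 < u t + shf v t
    · rw [hpf t m h2 (by omega), hpf t (m + 1) (by omega) hA]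
      have : m + 1 - shf v t = (m - shf v t) + 1 := by omega
      rw [this]; exact hf.2.2 _
    · by_cases hB : m + 1 < u t + v t
      · rw [hpg t (m + 1) (by omega) hB]
        by_cases hC : m < u t + shf v t
        · rw [hpf t m h2 hC]; exact hPQ _ _
        · rw [hpg t m (by omega) h1]
          have : m + 1 - u t = (m - u t) + 1 := by omega
          rw [this]; exact hg.2.2 _
      · have hm : m + 1 = u t + v t := by omega
        have hp1 : p (m + 1) = f (u t) := by
          have e1 : shf u (t + 1) = u t := shf_succ u t
          have e2 : shf v (t + 1) = v t := shf_succ v t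
          have h3 : u t < u (t + 1) := hu (by omega)
          rw [hpf (t + 1) (m + 1) (by rw [e1, e2]; omega) (by rw [e2]; omega), e2]
          congr 1; omega
        have hp0 : p m = g (v t - 1) := by
          rw [hpg t m (by omega) h1]
          congr 1; omega
        rw [hp0, hp1]; exact hmatch t
  · -- coverage
    rintro x (⟨j, rfl⟩ | ⟨k, rfl⟩)
    · have hex : ∃ t, j < u t := ⟨j + 1, by have : j + 1 ≤ u (j + 1) := hu.le_apply; omega⟩
      set t := Nat.find hex with htd
      have hj1 : j < u t := Nat.find_spec hex
      have hj0 : shf u t ≤ j := by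
        rcases h : t with _ | s
        · simp [shf_zero]
        · have hs : s < Nat.find hex := by show s < t ; omega
          have := Nat.find_min hex hs
          simp only [shf_succ]; omega
      refine ⟨j + shf v t, ?_⟩
      rw [hpf t (j + shf v t) (by omega) (by omega)]
      congr 1; omega
    · have hex : ∃ t, k < v t := ⟨k + 1, by have : k + 1 ≤ v (k + 1) := hv.le_apply; omega⟩
      set t := Nat.find hex with htd
      have hk1 : k < v t := Nat.find_spec hex
      have hk0 : shf v t ≤ k := by
        rcases h : t with _ | s
        · simp [shf_zero]
        · have hs : s < Nat.find hex := by show s < t ; omega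
          have := Nat.find_min hex hs
          simp only [shf_succ]; omega
      refine ⟨k + u t, ?_⟩
      rw [hpg t (k + u t) (by omega) (by omega)]
      congr 1; omega


lemma exists_big {a b : ℕ → ℕ} (ha : Function.Injective a) (hb : Function.Injective b)
    (A B : ℕ) : ∃ m, A < a m ∧ B < b m := by
  have h1 : (a ⁻¹' (Set.Iic A)).Finite := (Set.finite_Iic A).preimage ha.injOn
  have h2 : (b ⁻¹' (Set.Iic B)).Finite := (Set.finite_Iic B).preimage hb.injOn
  obtain ⟨m, hm⟩ := ((h1.union h2).infinite_compl).nonempty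
  simp only [Set.mem_compl_iff, Set.mem_union, Set.mem_preimage, Set.mem_Iic, not_or,
    not_le] at hm
  exact ⟨m, hm⟩

lemma exists_uv (c : ℕ → ℕ → Bool) (f g : ℕ → ℕ) (a b : ℕ → ℕ)
    (ha : Function.Injective a) (hb : Function.Injective b)
    (hM : ∀ n, c (g (a n)) (f (b n)) = blue) :
    ∃ u v : ℕ → ℕ, StrictMono u ∧ StrictMono v ∧ 1 ≤ u 0 ∧ 1 ≤ v 0 ∧
      ∀ t, c (g (v t - 1)) (f (u t)) = blue := by
  choose F hF1 hF2 using exists_big ha hb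
  set n : ℕ → ℕ := fun t => Nat.rec (F 0 0) (fun _ prev => F (a prev) (b prev)) t with hn
  have hn0 : n 0 = F 0 0 := rfl
  have hns : ∀ t, n (t + 1) = F (a (n t)) (b (n t)) := fun t => rfl
  refine ⟨fun t => b (n t), fun t => a (n t) + 1, ?_, ?_, ?_, ?_, ?_⟩
  · apply strictMono_nat_of_lt_succ
    intro t
    rw [hns t]
    exact hF2 _ _
  · apply strictMono_nat_of_lt_succ
    intro t
    rw [hns t]
    have := hF1 (a (n t)) (b (n t))
    omega
  · have := hF2 0 0
    show 1 ≤ b (n 0)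
    rw [hn0]
    omega
  · show 1 ≤ a (n 0) + 1
    omega
  · intro t
    simpa using hM (n t)

/-- Splicing two disjoint infinite blue paths `P`, `Q`: if all edges from `P` to `Q`
are blue and there is an infinite blue matching from `Q` to `P`, then there is a single
blue directed path covering both, of upper density at least that of `V(P) ∪ V(Q)`. -/
theorem stmt9 (c : ℕ → ℕ → Bool) (f g : ℕ → ℕ)
    (hf : InfPath c blue f) (hg : InfPath c blue g)
    (hdisj : Disjoint (Set.range f) (Set.range g))
    (hPQ : ∀ j k, c (f j) (g k) = blue)
    (a b : ℕ → ℕ) (ha : Function.Injective a) (hb : Function.Injective b)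
    (hM : ∀ n, c (g (a n)) (f (b n)) = blue) :
    ∃ p : ℕ → ℕ, InfPath c blue p ∧
      Set.range f ∪ Set.range g ⊆ Set.range p ∧
      upDens (Set.range f ∪ Set.range g) ≤ upDens (Set.range p) := by
  obtain ⟨u, v, hu, hv, hu0, hv0, hm⟩ := exists_uv c f g a b ha hb hM
  obtain ⟨p, hp, hcov⟩ := splice c f g hf hg hdisj hPQ u v hu hv hu0 hv0 hm
  exact ⟨p, hp, hcov, upDens_mono hcov⟩
end
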